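/- arXiv:2505.12174 — 4 statements merged into one kernel-verified Lean document; each statement's English description precedes it below -/
import Mathlib

section
/- Let (R,m,k) be an F-finite, F-pure local ring of prime characteristic p > 0, and suppose that R is Gorenstein so that Hom_R(F^e_*R, R) is generated by φ_e := φ_1 ∘ F_*^{e−1}φ_{e−1} as an F^e_*R-module (φ_1 a fixed generator of Hom_R(F_*R,R)). If I_e(R) = m for some e ≥ 1, then I_1(R) = m, where I_e(R) = {r ∈ R : the map R → F^e_*R, 1 ↦ F^e_*r, does not split}. -/
open IsLocalRing

/-- The `e`-th Frobenius splitting ideal of a local ring of characteristic `p`: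
elements `r` such that the `R`-linear map `R → F^e_* R`, `1 ↦ F^e_* r` does not split.
An element of `Hom_R(F^e_* R, R)` is encoded as an additive map `ψ : R → R`
satisfying `ψ (a^{p^e} * x) = a * ψ x`. -/
def splittingIdealSet (R : Type*) [CommRing R] [IsLocalRing R] (p e : ℕ) : Set R :=
  {r : R | ∀ ψ : R →+ R, (∀ a x : R, ψ (a ^ p ^ e * x) = a * ψ x) →
    ψ r ∈ maximalIdeal R}

/-- For an `F`-finite, `F`-pure Gorenstein local ring (so that `Hom_R(F^e_* R, R)` is
generated by the composition `φ_e = φ_1 ∘ F_* φ_{e-1}` of a fixed generator `φ_1` of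
`Hom_R(F_* R, R)`): if `I_e(R) = m` for some `e ≥ 1`, then `I_1(R) = m`. -/
theorem splittingIdeal_one_eq_maximal_of_exists
    {R : Type*} [CommRing R] [IsLocalRing R] (p : ℕ) [Fact p.Prime] [CharP R p]
    (hFfin : ∃ s : Finset R, ∀ x : R, ∃ c : R → R, x = ∑ y ∈ s, c y ^ p * y)
    (hFpure : ∃ ψ : R →+ R, (∀ a x : R, ψ (a ^ p * x) = a * ψ x) ∧ ψ 1 = 1)
    (φ : ℕ → R →+ R)
    (hlin : ∀ e, ∀ a x : R, φ e (a ^ p ^ e * x) = a * φ e x)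
    (hcomp : ∀ e, 1 ≤ e → φ (e + 1) = (φ 1).comp (φ e))
    (hgen : ∀ e, 1 ≤ e → ∀ ψ : R →+ R, (∀ a x : R, ψ (a ^ p ^ e * x) = a * ψ x) →
      ∃ c : R, ∀ x : R, ψ x = φ e (c * x))
    (e : ℕ) (he : 1 ≤ e)
    (hIe : splittingIdealSet R p e = (maximalIdeal R : Set R)) :
    splittingIdealSet R p 1 = (maximalIdeal R : Set R) := by

  obtain ⟨σ, hσ, hσ1⟩ := hFpure
  have hp : 1 ≤ p := (Fact.out : p.Prime).one_lt.le
  have hτlin : ∀ r a x : R, σ (r ^ (p - 1) * (a ^ p * x)) = a * σ (r ^ (p - 1) * x) := by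
    intro r a x
    rw [show r ^ (p - 1) * (a ^ p * x) = a ^ p * (r ^ (p - 1) * x) by ring, hσ]
  have hτr : ∀ r : R, σ (r ^ (p - 1) * r) = r := by
    intro r
    rw [show r ^ (p - 1) * r = r ^ p * 1 by
      rw [mul_one, ← pow_succ, Nat.sub_add_cancel hp], hσ, hσ1, mul_one]
  ext r
  simp only [splittingIdealSet, Set.mem_setOf_eq, SetLike.mem_coe]
  constructor
  · intro h
    by_contra hr
    have hu := h (σ.comp (AddMonoidHom.mulLeft (r ^ (p - 1))))
      (by
        intro a x
        simp only [AddMonoidHom.coe_comp, AddMonoidHom.coe_mulLeft, Function.comp_apply,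
          pow_one]
        exact hτlin r a x)
    simp only [AddMonoidHom.coe_comp, AddMonoidHom.coe_mulLeft, Function.comp_apply,
      hτr r] at hu
    exact hr hu
  · intro hr ψ hψ
    have key : ∀ k, 1 ≤ k → ∃ χ : R →+ R,
        (∀ a x : R, χ (a ^ p ^ k * x) = a * χ x) ∧ χ r = ψ r := by
      intro k hk
      induction k with
      | zero => omega
      | succ n ih =>
        rcases Nat.lt_or_ge n 1 with h1 | h1
        · interval_cases n
          exact ⟨ψ, hψ, rfl⟩
        · obtain ⟨χ, hχ, hχr⟩ := ih h1
          refine ⟨χ.comp (σ.comp (AddMonoidHom.mulLeft (r ^ (p - 1)))), ?_, ?_⟩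
          · intro a x
            simp only [AddMonoidHom.coe_comp, AddMonoidHom.coe_mulLeft, Function.comp_apply]
            rw [show a ^ p ^ (n + 1) = (a ^ p ^ n) ^ p by rw [← pow_mul, ← pow_succ],
              hτlin r (a ^ p ^ n) x, hχ]
          · simp only [AddMonoidHom.coe_comp, AddMonoidHom.coe_mulLeft, Function.comp_apply,
              hτr r, hχr]
    obtain ⟨χ, hχ, hχr⟩ := key e he
    have hrIe : r ∈ splittingIdealSet R p e := hIe ▸ hr
    have := hrIe χ hχ
    rwa [hχr] at this
end

section
/- Let k be a field of characteristic 7 and f = x^3 + y^3 + z^3 ∈ k[x,y,z,w]. Then for every e ≥ 0 and every 0 ≤ i ≤ 7^e − 1, we have w^i f^{7^e−1} ∉ (x^{7^e}, y^{7^e}, z^{7^e}, w^{7^e}). -/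
open MvPolynomial

/-- `rep7 e = (7^e - 1)/6`, the base-7 repunit with `e` digits. -/
private def rep7 : ℕ → ℕ
  | 0 => 0
  | e + 1 => 7 * rep7 e + 1

private lemma six_rep7 (e : ℕ) : 6 * rep7 e + 1 = 7 ^ e := by
  induction e with
  | zero => simp [rep7]
  | succ e ih => simp only [rep7, pow_succ]; omega

private lemma rep7_lt {b : ℕ} (hb : b ≤ 6) (e : ℕ) : b * rep7 e < 7 ^ e := by
  have h := six_rep7 e
  have : b * rep7 e ≤ 6 * rep7 e := Nat.mul_le_mul_right _ hb
  omega

private lemma rep7_digit {b : ℕ} (hb : b < 7) :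
    ∀ e i, i < e → b * rep7 e / 7 ^ i % 7 = b := by
  intro e
  induction e with
  | zero => intro i hi; omega
  | succ e ih =>
    intro i hi
    have h : b * rep7 (e + 1) = 7 * (b * rep7 e) + b := by simp only [rep7]; ring
    cases i with
    | zero => simp [h]; omega
    | succ j =>
      have h2 : (7 * (b * rep7 e) + b) / 7 = b * rep7 e := by omega
      rw [h, pow_succ', ← Nat.div_div_eq_div_mul, h2]
      exact ih j (by omega)

private lemma choose_rep7_ne_zero {c b : ℕ} (hb : b < 7) (hc : c < 7)
    (hnz : (Nat.choose c b : ZMod 7) ≠ 0) (e : ℕ) :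
    ((Nat.choose (c * rep7 e) (b * rep7 e) : ZMod 7)) ≠ 0 := by
  haveI : Fact (Nat.Prime 7) := ⟨by norm_num⟩
  have h := Choose.choose_modEq_prod_range_choose (p := 7)
      (n := c * rep7 e) (k := b * rep7 e) (rep7_lt (by omega) e) (rep7_lt (by omega) e)
  have h2 : ((Nat.choose (c * rep7 e) (b * rep7 e) : ℤ) : ZMod 7) =
      ((∏ i ∈ Finset.range e,
        (Nat.choose (c * rep7 e / 7 ^ i % 7) (b * rep7 e / 7 ^ i % 7) : ℤ) : ℤ) : ZMod 7) :=
    (ZMod.intCast_eq_intCast_iff _ _ _).mpr h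
  push_cast at h2
  rw [h2]
  rw [Finset.prod_congr rfl fun i hi => by
    rw [rep7_digit hc e i (Finset.mem_range.mp hi), rep7_digit hb e i (Finset.mem_range.mp hi)]]
  rw [Finset.prod_const]
  exact pow_ne_zero _ hnz

private lemma multinomial_rep7_ne_zero {k : Type*} [Field k] [CharP k 7] (e : ℕ) :
    ((Nat.multinomial ({0, 1, 2} : Finset (Fin 4)) (fun _ => 2 * rep7 e) : k)) ≠ 0 := by
  have hN : Nat.multinomial ({0, 1, 2} : Finset (Fin 4)) (fun _ => 2 * rep7 e) =
      Nat.choose (6 * rep7 e) (2 * rep7 e) * Nat.choose (4 * rep7 e) (2 * rep7 e) := by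
    rw [show ({0, 1, 2} : Finset (Fin 4)) = insert 0 (insert 1 {2}) from rfl,
      Nat.multinomial_insert (by decide), Nat.multinomial_insert (by decide),
      Nat.multinomial_singleton, Finset.sum_insert (by decide), Finset.sum_singleton]
    ring_nf
  have hz : ((Nat.multinomial ({0, 1, 2} : Finset (Fin 4)) (fun _ => 2 * rep7 e) : ZMod 7)) ≠ 0 := by
    haveI : Fact (Nat.Prime 7) := ⟨by norm_num⟩
    rw [hN]
    push_cast
    exact mul_ne_zero
      (choose_rep7_ne_zero (by omega) (by omega) (by decide) e)
      (choose_rep7_ne_zero (by omega) (by omega) (by decide) e)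
  intro h
  exact hz ((CharP.cast_eq_zero_iff (ZMod 7) 7 _).mpr ((CharP.cast_eq_zero_iff k 7 _).mp h))

private lemma coeff_mem_span_eq_zero {k : Type*} [Field k] {q : ℕ} {g : MvPolynomial (Fin 4) k}
    (hg : g ∈ Ideal.span {(X 0 : MvPolynomial (Fin 4) k) ^ q, X 1 ^ q, X 2 ^ q, X 3 ^ q})
    (m : Fin 4 →₀ ℕ) (hm : ∀ j, m j < q) : coeff m g = 0 := by
  have key : ∀ (j : Fin 4) (u : MvPolynomial (Fin 4) k),
      coeff m (u * X j ^ q) = 0 := by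
    intro j u
    rw [X_pow_eq_monomial, coeff_mul_monomial', if_neg]
    rw [Finsupp.single_le_iff]
    exact fun h => absurd h (by have := hm j; omega)
  rw [show ({(X 0 : MvPolynomial (Fin 4) k) ^ q, X 1 ^ q, X 2 ^ q, X 3 ^ q} : Set _) =
    insert ((X 0 : MvPolynomial (Fin 4) k) ^ q) (insert (X 1 ^ q) (insert (X 2 ^ q) {X 3 ^ q}))
    from rfl] at hg
  rw [Ideal.mem_span_insert] at hg
  obtain ⟨u0, z0, hz0, rfl⟩ := hg
  rw [Ideal.mem_span_insert] at hz0
  obtain ⟨u1, z1, hz1, rfl⟩ := hz0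
  rw [Ideal.mem_span_insert] at hz1
  obtain ⟨u2, z2, hz2, rfl⟩ := hz1
  rw [Ideal.mem_span_singleton'] at hz2
  obtain ⟨u3, rfl⟩ := hz2
  simp only [coeff_add, mul_comm _ ((X _ : MvPolynomial (Fin 4) k) ^ q)] at *
  simp [key]

private lemma coeff_target {k : Type*} [Field k] (e : ℕ) :
    coeff (Finsupp.single 0 (7 ^ e - 1) + Finsupp.single 1 (7 ^ e - 1) +
        Finsupp.single 2 (7 ^ e - 1))
      (((X 0 : MvPolynomial (Fin 4) k) ^ 3 + X 1 ^ 3 + X 2 ^ 3) ^ (7 ^ e - 1)) =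
      (Nat.multinomial ({0, 1, 2} : Finset (Fin 4)) (fun _ => 2 * rep7 e) : k) := by
  classical
  have h6 := six_rep7 e
  set r := rep7 e with hr
  set t : Fin 4 →₀ ℕ := Finsupp.single 0 (7 ^ e - 1) + Finsupp.single 1 (7 ^ e - 1) +
      Finsupp.single 2 (7 ^ e - 1) with ht
  have hf : (X 0 : MvPolynomial (Fin 4) k) ^ 3 + X 1 ^ 3 + X 2 ^ 3 =
      ∑ j ∈ ({0, 1, 2} : Finset (Fin 4)), X j ^ 3 := by
    rw [show ({0, 1, 2} : Finset (Fin 4)) = insert 0 (insert 1 {2}) from rfl,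
      Finset.sum_insert (by decide), Finset.sum_insert (by decide), Finset.sum_singleton]
    ring
  have hprod : ∀ kf : Fin 4 → ℕ, (∏ j ∈ ({0, 1, 2} : Finset (Fin 4)), (X j ^ 3) ^ kf j) =
      (monomial (Finsupp.single (0 : Fin 4) (3 * kf 0) + Finsupp.single 1 (3 * kf 1) +
        Finsupp.single 2 (3 * kf 2)) (1 : k)) := by
    intro kf
    rw [show ({0, 1, 2} : Finset (Fin 4)) = insert 0 (insert 1 {2}) from rfl,
      Finset.prod_insert (by decide), Finset.prod_insert (by decide), Finset.prod_singleton]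
    simp only [← pow_mul]
    simp only [X_pow_eq_monomial, monomial_mul, mul_one, add_assoc]
  rw [hf, Finset.sum_pow_eq_sum_piAntidiag, coeff_sum]
  simp only [hprod, ← map_natCast (C : k →+* MvPolynomial (Fin 4) k), coeff_C_mul,
    coeff_monomial]
  rw [Finset.sum_eq_single_of_mem (fun j : Fin 4 => if j = 3 then 0 else 2 * r)]
  · have heq : (Finsupp.single (0 : Fin 4) (3 * (if (0 : Fin 4) = 3 then 0 else 2 * r)) +
        Finsupp.single 1 (3 * (if (1 : Fin 4) = 3 then 0 else 2 * r)) +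
        Finsupp.single 2 (3 * (if (2 : Fin 4) = 3 then 0 else 2 * r))) = t := by
      ext j
      fin_cases j <;> simp [ht, Finsupp.single_apply] <;> omega
    rw [if_pos heq, mul_one]
    exact congrArg _ (Nat.multinomial_congr (s := ({0, 1, 2} : Finset (Fin 4)))
      (f := fun j => if j = 3 then 0 else 2 * r) (g := fun _ => 2 * r)
      fun j hj => by fin_cases hj <;> rfl)
  · rw [Finset.mem_piAntidiag]
    refine ⟨?_, fun j hj => ?_⟩
    · rw [show ({0, 1, 2} : Finset (Fin 4)) = insert 0 (insert 1 {2}) from rfl,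
        Finset.sum_insert (by decide), Finset.sum_insert (by decide), Finset.sum_singleton]
      simp only [if_neg (by decide : ¬(0 : Fin 4) = 3), if_neg (by decide : ¬(1 : Fin 4) = 3),
        if_neg (by decide : ¬(2 : Fin 4) = 3)]
      omega
    · fin_cases j <;> simp_all
  · intro kf hkf hne
    rw [if_neg, mul_zero]
    intro hEq
    apply hne
    rw [Finset.mem_piAntidiag] at hkf
    have h3 : kf 3 = 0 := by
      by_contra h
      have := hkf.2 3 h
      simp at this
    have h0 := DFunLike.congr_fun hEq 0
    have h1 := DFunLike.congr_fun hEq 1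
    have h2 := DFunLike.congr_fun hEq 2
    simp [ht, Finsupp.single_apply] at h0 h1 h2
    funext j
    fin_cases j <;> simp <;> omega

/-- For `f = x³ + y³ + z³` over a field of characteristic `7`, for every `e` and
every `0 ≤ i ≤ 7^e - 1`, `wⁱ f^{7^e - 1} ∉ (x^{7^e}, y^{7^e}, z^{7^e}, w^{7^e})`. -/
theorem cubic_cone_splitting_numbers (k : Type*) [Field k] [CharP k 7]
    (e i : ℕ) (hi : i ≤ 7 ^ e - 1) :
    (X 3 : MvPolynomial (Fin 4) k) ^ i *
        ((X 0 : MvPolynomial (Fin 4) k) ^ 3 + X 1 ^ 3 + X 2 ^ 3) ^ (7 ^ e - 1) ∉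
      Ideal.span {(X 0 : MvPolynomial (Fin 4) k) ^ 7 ^ e, X 1 ^ 7 ^ e,
        X 2 ^ 7 ^ e, X 3 ^ 7 ^ e} := by
  intro hmem
  have h7 : 0 < 7 ^ e := pow_pos (by norm_num) e
  set t : Fin 4 →₀ ℕ := Finsupp.single 0 (7 ^ e - 1) + Finsupp.single 1 (7 ^ e - 1) +
      Finsupp.single 2 (7 ^ e - 1) with ht
  have hzero := coeff_mem_span_eq_zero hmem (t + Finsupp.single 3 i)
    (fun j => by fin_cases j <;> simp [ht, Finsupp.single_apply] <;> omega)
  rw [mul_comm, show (X 3 : MvPolynomial (Fin 4) k) ^ i = monomial (Finsupp.single 3 i) (1 : k)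
    from X_pow_eq_monomial, coeff_mul_monomial', if_pos le_add_self,
    add_tsub_cancel_right, mul_one, coeff_target] at hzero
  exact multinomial_rep7_ne_zero e hzero
end

section
/- Let (R,m) be a Noetherian local ring of characteristic p and (x) = (x_1,…,x_d) an ideal generated by a sequence of elements. Suppose u, f ∈ R satisfy u^{p^e} f^{p^e−1} ∈ ((x)^{[p^e]} :_R m) for all e ∈ ℕ, and let ε ∈ (x)^{[p]}. Then u^{p^e}(f+ε)^{p^e−1} ∈ ((x)^{[p^e]} :_R m) for all e ∈ ℕ. -/
open IsLocalRing

section Aux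

set_option linter.unusedSectionVars false
variable {R : Type*} [CommRing R] [IsLocalRing R]
    (p : ℕ) [Fact p.Prime] [CharP R p]

lemma aux_map_map (I : Ideal R) (a b : ℕ) :
    (I.map (iterateFrobenius R p a)).map (iterateFrobenius R p b)
      = I.map (iterateFrobenius R p (b + a)) := by
  rw [Ideal.map_map, ← iterateFrobenius_add]

/-- Key step: for `1 ≤ i ≤ p^e - 1`, the cross term lies in the Frobenius power itself. -/
lemma aux_step {d : ℕ} (x : Fin d → R) (u f ε : R)
    (hx : ∀ j, x j ∈ maximalIdeal R)
    (hu : ∀ e : ℕ, u ^ p ^ e * f ^ (p ^ e - 1) ∈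
      ((Ideal.span (Set.range x)).map (iterateFrobenius R p e)).colon (maximalIdeal R))
    (hε : ε ∈ (Ideal.span (Set.range x)).map (frobenius R p))
    (e i : ℕ) (hi1 : 1 ≤ i) (hi2 : i ≤ p ^ e - 1) :
    u ^ p ^ e * ε ^ i * f ^ (p ^ e - 1 - i) ∈
      (Ideal.span (Set.range x)).map (iterateFrobenius R p e) := by
  have hp : 1 < p := (Fact.out : p.Prime).one_lt
  set I : Ideal R := Ideal.span (Set.range x) with hI
  set e0 := Nat.log p i with he0
  have h1 : p ^ e0 ≤ i := Nat.pow_log_le_self p (by omega)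
  have h2 : i < p ^ (e0 + 1) := Nat.lt_pow_succ_log_self hp i
  have hpe : 1 ≤ p ^ e := Nat.one_le_pow _ _ (by omega)
  have he0e : e0 + 1 ≤ e := by
    by_contra h
    have : p ^ e ≤ p ^ e0 := Nat.pow_le_pow_right (by omega) (by omega)
    omega
  set k := e - (e0 + 1) with hk
  have hke : e0 + 1 + k = e := by omega
  set b := u ^ p ^ k * f ^ (p ^ k - 1) with hb
  have hbmem : b ∈ (I.map (iterateFrobenius R p k)).colon (maximalIdeal R) := hu k
  -- ε ^ p ^ e0 ∈ I.map (iterateFrobenius R p (e0 + 1))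
  have hεm : ε ^ p ^ e0 ∈ I.map (iterateFrobenius R p (e0 + 1)) := by
    have : iterateFrobenius R p e0 ε ∈
        (I.map (frobenius R p)).map (iterateFrobenius R p e0) :=
      Ideal.mem_map_of_mem _ hε
    rw [← iterateFrobenius_one (R := R) p, aux_map_map] at this
    rwa [iterateFrobenius_def] at this
  -- the product of b ^ p ^ (e0+1) with anything in I.map (F (e0+1)) is in I.map (F e)
  have key : ∀ z ∈ I.map (iterateFrobenius R p (e0 + 1)),
      b ^ p ^ (e0 + 1) * z ∈ I.map (iterateFrobenius R p e) := by
    intro z hz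
    rw [hI, Ideal.map_span] at hz
    refine Submodule.span_induction ?_ ?_ ?_ ?_ hz
    · rintro _ ⟨_, ⟨j, rfl⟩, rfl⟩
      rw [iterateFrobenius_def, ← mul_pow, ← iterateFrobenius_def]
      have hbx : b * x j ∈ I.map (iterateFrobenius R p k) := by
        have := Submodule.mem_colon.mp hbmem (x j) (hx j)
        rwa [smul_eq_mul] at this
      have := Ideal.mem_map_of_mem (iterateFrobenius R p (e0 + 1)) hbx
      rwa [aux_map_map, hke] at this
    · simp
    · intro y z _ _ hy hz
      rw [mul_add]; exact Ideal.add_mem _ hy hz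
    · intro r z _ hz
      rw [smul_eq_mul, mul_comm r z, ← mul_assoc]
      exact Ideal.mul_mem_right r _ hz
  have hmem := key _ hεm
  have hmem2 : ε ^ (i - p ^ e0) * f ^ (p ^ (e0 + 1) - 1 - i) * (b ^ p ^ (e0 + 1) * ε ^ p ^ e0)
      ∈ I.map (iterateFrobenius R p e) := Ideal.mul_mem_left _ _ hmem
  have heq : u ^ p ^ e * ε ^ i * f ^ (p ^ e - 1 - i)
      = ε ^ (i - p ^ e0) * f ^ (p ^ (e0 + 1) - 1 - i) * (b ^ p ^ (e0 + 1) * ε ^ p ^ e0) := by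
    have hpk : 1 ≤ p ^ k := Nat.one_le_pow _ _ (by omega)
    have hmul : p ^ k * p ^ (e0 + 1) = p ^ e := by
      rw [← pow_add]; congr 1; omega
    have hsub : (p ^ k - 1) * p ^ (e0 + 1) = p ^ e - p ^ (e0 + 1) := by
      rw [Nat.sub_mul, one_mul, hmul]
    have hle : p ^ (e0 + 1) ≤ p ^ e := Nat.pow_le_pow_right (by omega) (by omega)
    have ha : i - p ^ e0 + p ^ e0 = i := by omega
    have hb2 : p ^ (e0 + 1) - 1 - i + (p ^ e - p ^ (e0 + 1)) = p ^ e - 1 - i := by omega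
    have hε' : ε ^ (i - p ^ e0) * ε ^ p ^ e0 = ε ^ i := by rw [← pow_add, ha]
    have hf' : f ^ (p ^ (e0 + 1) - 1 - i) * f ^ (p ^ e - p ^ (e0 + 1)) = f ^ (p ^ e - 1 - i) := by
      rw [← pow_add, hb2]
    rw [hb, mul_pow, ← pow_mul, ← pow_mul, hmul, hsub, ← hε', ← hf']
    ring
  rw [heq]
  exact hmem2

end Aux

/-- Perturbation invariance of the splitting condition: if
`u^{p^e} f^{p^e-1} ∈ ((x)^{[p^e]} : m)` for all `e`, and `ε ∈ (x)^{[p]}`, then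
`u^{p^e} (f+ε)^{p^e-1} ∈ ((x)^{[p^e]} : m)` for all `e`. -/
theorem perturbation_splitting_invariance
    {R : Type*} [CommRing R] [IsLocalRing R] [IsNoetherianRing R]
    (p : ℕ) [Fact p.Prime] [CharP R p]
    {d : ℕ} (x : Fin d → R) (u f ε : R)
    (hu : ∀ e : ℕ, u ^ p ^ e * f ^ (p ^ e - 1) ∈
      ((Ideal.span (Set.range x)).map (iterateFrobenius R p e)).colon (maximalIdeal R))
    (hε : ε ∈ (Ideal.span (Set.range x)).map (frobenius R p)) :
    ∀ e : ℕ, u ^ p ^ e * (f + ε) ^ (p ^ e - 1) ∈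
      ((Ideal.span (Set.range x)).map (iterateFrobenius R p e)).colon (maximalIdeal R) := by
  have hp : 1 < p := (Fact.out : p.Prime).one_lt
  set I : Ideal R := Ideal.span (Set.range x) with hI
  by_cases hx : ∀ j, x j ∈ maximalIdeal R
  · intro e
    have hpe : 1 ≤ p ^ e := Nat.one_le_pow _ _ (by omega)
    set n := p ^ e - 1 with hn
    rw [add_pow, Finset.mul_sum]
    apply Ideal.sum_mem
    intro k hk
    rw [Finset.mem_range] at hk
    by_cases hkn : k = n
    · subst hkn
      simpa using hu e
    · -- cross term, ε-exponent i = n - k ≥ 1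
      have hmem : u ^ p ^ e * ε ^ (n - k) * f ^ (p ^ e - 1 - (n - k)) ∈
          I.map (iterateFrobenius R p e) :=
        aux_step p x u f ε hx hu hε e (n - k) (by omega) (by omega)
      have hfk : p ^ e - 1 - (n - k) = k := by omega
      rw [hfk] at hmem
      have : u ^ p ^ e * (f ^ k * ε ^ (n - k) * (n.choose k : R))
          = (n.choose k : R) * (u ^ p ^ e * ε ^ (n - k) * f ^ k) := by ring
      rw [this]
      have hmem' : (n.choose k : R) * (u ^ p ^ e * ε ^ (n - k) * f ^ k) ∈
          I.map (iterateFrobenius R p e) := Ideal.mul_mem_left _ _ hmem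
      exact Submodule.mem_colon.mpr fun m _ => by
        rw [smul_eq_mul]; exact Ideal.mul_mem_right m _ hmem'
  · -- some x j is a unit, so everything is trivial
    push_neg at hx
    obtain ⟨j, hj⟩ := hx
    have hunit : IsUnit (x j) := by
      by_contra h
      exact hj ((mem_maximalIdeal _).mpr h)
    intro e
    have htop : I.map (iterateFrobenius R p e) = ⊤ := by
      apply Ideal.eq_top_of_isUnit_mem _
        (Ideal.mem_map_of_mem (iterateFrobenius R p e)
          (Ideal.subset_span (Set.mem_range_self j)))
      rw [iterateFrobenius_def]
      exact hunit.pow _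
    rw [htop]
    exact Submodule.mem_colon.mpr fun m _ => Submodule.mem_top
end

section
/- Let (R,m) be a Noetherian local ring and x_1,…,x_d a system of parameters. Then there exists n ∈ ℕ such that for all ε_1,…,ε_d ∈ m^n, the elements x_1+ε_1, …, x_d+ε_d again form a system of parameters of R. -/
open IsLocalRing

/-- Srinivas–Trivedi stability of systems of parameters: if `x₁, …, x_d` is a system
of parameters of a Noetherian local ring of dimension `d`, then there is `n` such that
for all `ε₁, …, ε_d ∈ m^n`, the elements `x₁ + ε₁, …, x_d + ε_d` again form a system
of parameters. -/
theorem sop_perturbation_stability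
    {R : Type*} [CommRing R] [IsLocalRing R] [IsNoetherianRing R]
    {d : ℕ} (hd : ringKrullDim R = d) (x : Fin d → R)
    (hx : (Ideal.span (Set.range x)).radical = maximalIdeal R) :
    ∃ n : ℕ, ∀ ε : Fin d → R, (∀ i, ε i ∈ maximalIdeal R ^ n) →
      (Ideal.span (Set.range fun i => x i + ε i)).radical = maximalIdeal R := by
  obtain ⟨n, hn⟩ := Ideal.exists_radical_pow_le_of_fg (Ideal.span (Set.range x))
    (hx ▸ IsNoetherian.noetherian _)
  rw [hx] at hn
  -- m^(n+1) ≤ span x as well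
  have hn1 : maximalIdeal R ^ (n + 1) ≤ Ideal.span (Set.range x) :=
    le_trans (Ideal.pow_le_pow_right (Nat.le_succ n)) hn
  refine ⟨n + 2, fun ε hε => ?_⟩
  set J := Ideal.span (Set.range fun i => x i + ε i) with hJ
  -- each x i ∈ m
  have hxm : ∀ i, x i ∈ maximalIdeal R := fun i => by
    rw [← hx]; exact Ideal.le_radical (Ideal.subset_span ⟨i, rfl⟩)
  have hεm : ∀ i, ε i ∈ maximalIdeal R ^ (n + 2) := hε
  -- span x ≤ J + m^(n+2)
  have hspan : Ideal.span (Set.range x) ≤ J ⊔ maximalIdeal R ^ (n + 2) := by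
    rw [Ideal.span_le]
    rintro _ ⟨i, rfl⟩
    have : x i = (x i + ε i) + (-(ε i)) := by ring
    rw [this]
    exact Ideal.add_mem _ (Ideal.mem_sup_left (Ideal.subset_span ⟨i, rfl⟩))
      (Ideal.mem_sup_right (neg_mem (hεm i)))
  -- m^(n+1) ≤ J ⊔ m • m^(n+1)
  have key : maximalIdeal R ^ (n + 1) ≤ J ⊔ maximalIdeal R • maximalIdeal R ^ (n + 1) := by
    refine le_trans hn1 (le_trans hspan ?_)
    apply sup_le_sup_left
    rw [Ideal.smul_eq_mul, ← pow_succ']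
  -- Nakayama
  have hNak : maximalIdeal R ^ (n + 1) ≤ J :=
    Submodule.le_of_le_smul_of_le_jacobson_bot (IsNoetherian.noetherian _)
      (IsLocalRing.maximalIdeal_le_jacobson _) key
  -- conclude
  apply le_antisymm
  · have hJm : J ≤ maximalIdeal R := by
      rw [hJ, Ideal.span_le]
      rintro _ ⟨i, rfl⟩
      exact add_mem (hxm i) (Ideal.pow_le_self (Nat.succ_ne_zero _) (hεm i))
    calc J.radical ≤ (maximalIdeal R).radical := Ideal.radical_mono hJm
      _ = maximalIdeal R := (maximalIdeal.isMaximal R).isPrime.radical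
  · have h1 := Ideal.radical_mono hNak
    rwa [Ideal.radical_pow _ n.succ_ne_zero,
      (maximalIdeal.isMaximal R).isPrime.radical] at h1
end
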